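/- arXiv:1610.08885 — 4 statements merged into one kernel-verified Lean document; each statement's English description precedes it below -/
import Mathlib

section
/- Let n be a positive integer and let α_1 < α_2 < … < α_n and β_1 < β_2 < … < β_n be strictly increasing sequences of positive real numbers. Then the n×n Cauchy matrix M with entries M_{ij} = 1/(α_i + β_j) has positive determinant: det(M) > 0. -/
open Matrix BigOperators

/-!
Eliminating the first row and column of a Cauchy matrix `1 / (α i + β j)` is a Schur complement
step, and the complement is again a Cauchy matrix, that of the shifted sequences, with its rows
scaled by `(α i - α 0) / (α i + β 0)` and its columns by `(β j - β 0) / (α 0 + β j)`. For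
increasing sequences with positive sums `α i + β j` all these factors are positive, so the sign of
the determinant follows by induction on the size.
-/

namespace Matrix

variable {K : Type*}

theorem det_succ_eq_mul_det_schur [Field K] {n : ℕ}
    (A : Matrix (Fin (n + 1)) (Fin (n + 1)) K) (h : A 0 0 ≠ 0) :
    A.det = A 0 0 *
      (of fun i j : Fin n => A i.succ j.succ - A i.succ 0 / A 0 0 * A 0 j.succ).det := by
  let c : Fin (n + 1) → K := Fin.cases 0 fun i => A i.succ 0 / A 0 0
  let B : Matrix (Fin (n + 1)) (Fin (n + 1)) K := of fun i j => A i j - c i * A 0 j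
  have hB : A.det = B.det :=
    det_eq_of_forall_row_eq_smul_add_const c 0 rfl fun i j => by
      refine Fin.cases ?_ (fun i => ?_) i <;> simp [B, c]
  have hB_col : ∀ i : Fin n, B i.succ 0 = 0 := fun i => by simp [B, c, h]
  rw [hB, det_succ_column_zero, Fin.sum_univ_succ, Finset.sum_eq_zero fun i _ => by simp [hB_col]]
  simp [B, c, submatrix]

def cauchyMatrix {m n : Type*} [Field K] (α : m → K) (β : n → K) : Matrix m n K :=
  of fun i j => 1 / (α i + β j)

theorem det_cauchyMatrix_succ [Field K] {n : ℕ} (α β : Fin (n + 1) → K)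
    (h : ∀ i j, α i + β j ≠ 0) :
    (cauchyMatrix α β).det =
      (∏ i : Fin n, (α i.succ - α 0) / (α i.succ + β 0)) *
        (∏ j : Fin n, (β j.succ - β 0) / (α 0 + β j.succ)) / (α 0 + β 0) *
        (cauchyMatrix (α ∘ Fin.succ) (β ∘ Fin.succ)).det := by
  set C' := cauchyMatrix (α ∘ Fin.succ) (β ∘ Fin.succ)
  calc (cauchyMatrix α β).det
      = cauchyMatrix α β 0 0 * (of fun i j : Fin n => cauchyMatrix α β i.succ j.succ -
          cauchyMatrix α β i.succ 0 / cauchyMatrix α β 0 0 * cauchyMatrix α β 0 j.succ).det :=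
        det_succ_eq_mul_det_schur _ (by simp [cauchyMatrix, h])
    _ = cauchyMatrix α β 0 0 * ((∏ i : Fin n, (α i.succ - α 0) / (α i.succ + β 0)) *
          ((∏ j : Fin n, (β j.succ - β 0) / (α 0 + β j.succ)) * C'.det)) := by
        rw [← det_mul_row, ← det_mul_column]
        congr 2
        ext i j
        simp only [C', cauchyMatrix, of_apply, Function.comp_apply]
        field_simp [h i.succ j.succ, h i.succ 0, h 0 j.succ, h 0 0]
        ring
    _ = _ := by
        simp only [cauchyMatrix, of_apply]
        ring

theorem det_cauchyMatrix_pos [Field K] [LinearOrder K] [IsStrictOrderedRing K] {n : ℕ}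
    (α β : Fin n → K) (hα : StrictMono α) (hβ : StrictMono β) (hpos : ∀ i j, 0 < α i + β j) :
    0 < (cauchyMatrix α β).det := by
  induction n with
  | zero => simp
  | succ n ih =>
    have hα₀ : ∀ i : Fin n, 0 < α i.succ - α 0 := fun i => sub_pos.2 (hα i.succ_pos)
    have hβ₀ : ∀ j : Fin n, 0 < β j.succ - β 0 := fun j => sub_pos.2 (hβ j.succ_pos)
    rw [det_cauchyMatrix_succ α β fun i j => (hpos i j).ne']
    refine mul_pos (div_pos (mul_pos ?_ ?_) (hpos 0 0)) ?_
    · exact Finset.prod_pos fun i _ => div_pos (hα₀ i) (hpos _ _)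
    · exact Finset.prod_pos fun j _ => div_pos (hβ₀ j) (hpos _ _)
    · exact ih _ _ (hα.comp Fin.strictMono_succ) (hβ.comp Fin.strictMono_succ)
        fun i j => hpos _ _

end Matrix

theorem cauchy_det_pos_general (n : ℕ) (α β : Fin n → ℝ)
    (hα : StrictMono α) (hβ : StrictMono β)
    (hαpos : ∀ i, 0 < α i) (hβpos : ∀ i, 0 < β i) :
    0 < (Matrix.of fun i j => 1 / (α i + β j)).det :=
  det_cauchyMatrix_pos α β hα hβ fun i j => add_pos (hαpos i) (hβpos j)

/-- A Cauchy matrix built from two strictly increasing sequences of positive reals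
has positive determinant. -/
theorem cauchy_det_pos (n : ℕ) (hn : 0 < n) (α β : Fin n → ℝ)
    (hα : StrictMono α) (hβ : StrictMono β)
    (hαpos : ∀ i, 0 < α i) (hβpos : ∀ i, 0 < β i) :
    0 < (Matrix.of fun i j => 1 / (α i + β j)).det :=
  cauchy_det_pos_general n α β hα hβ hαpos hβpos
end

section
/- Define ξ(b) to be the smallest eigenvalue of W(b). If b ∈ ℝ^n is a unit vector with at least one zero entry, then ξ(b) = 0, while ξ(b) > 0 for every unit vector b with all entries nonzero. Consequently, any unit vector b* that maximizes ξ over the unit sphere of ℝ^n has all entries nonzero. -/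
open Matrix BigOperators

/-- The Cauchy matrix with entries `1/(λᵢ + λⱼ)`. -/
noncomputable def cauchyPsi (n : ℕ) (lam : Fin n → ℝ) : Matrix (Fin n) (Fin n) ℝ :=
  Matrix.of fun i j => 1 / (lam i + lam j)

/-- `W(b) = diag(b) Ψ diag(b)`. -/
noncomputable def cauchyW (n : ℕ) (lam : Fin n → ℝ) (b : Fin n → ℝ) :
    Matrix (Fin n) (Fin n) ℝ :=
  Matrix.diagonal b * cauchyPsi n lam * Matrix.diagonal b

/-- `ξ(b)` : the smallest eigenvalue of `W(b)`. -/
noncomputable def xi (n : ℕ) (lam : Fin n → ℝ) (b : Fin n → ℝ) : ℝ :=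
  sInf (spectrum ℝ (cauchyW n lam b))

/-!
`Ψ` is the Gram matrix of the exponentials `t ↦ exp (-λᵢ t)` in `L²(0, ∞)`:
`xᵀ Ψ x = ∫₀^∞ (∑ᵢ xᵢ exp (-λᵢ t))² dt`. Distinct exponentials are linearly independent on
`[0, ∞)` (Dedekind's lemma for the characters `t ↦ exp (-λᵢ t)` of the monoid `(ℝ≥0, +)`),
so `Ψ` is positive definite. Hence `W(b) = diag(b) Ψ diag(b)` is positive semidefinite, singular
when some `bᵢ = 0` (so `ξ(b) = 0`) and positive definite when no `bᵢ` vanishes (so `ξ(b) > 0`).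
A maximizer of `ξ` must beat the constant unit vector, so it has no zero entry.
-/

open Real MeasureTheory Set
open scoped NNReal

noncomputable def expCharacter (c : ℝ) : Multiplicative ℝ≥0 →* ℝ where
  toFun t := exp (c * (t.toAdd : ℝ))
  map_one' := by simp
  map_mul' s t := by simp [mul_add, exp_add]

theorem eq_zero_of_sum_mul_exp_eq_zero {ι : Type*} [Fintype ι] {c : ι → ℝ}
    (hc : Function.Injective c) {x : ι → ℝ} (h : ∀ t : ℝ, 0 ≤ t → ∑ i, x i * exp (c i * t) = 0) :
    x = 0 := by
  have hinj : Function.Injective fun i => expCharacter (c i) := fun i j hij => by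
    have := DFunLike.congr_fun hij (Multiplicative.ofAdd 1)
    simpa [expCharacter, hc.eq_iff] using this
  have hli := (linearIndependent_monoidHom (Multiplicative ℝ≥0) ℝ).comp _ hinj
  funext i
  refine Fintype.linearIndependent_iff.mp hli x (funext fun t => ?_) i
  simpa [expCharacter, Finset.sum_apply, mul_comm] using h _ t.toAdd.2

variable {n : ℕ} {lam : Fin n → ℝ}

theorem sq_sum_mul_exp (x : Fin n → ℝ) (t : ℝ) :
    (∑ i, x i * exp (-lam i * t)) ^ 2 = ∑ i, ∑ j, x i * x j * exp (-(lam i + lam j) * t) := by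
  rw [sq, Finset.sum_mul_sum]
  refine Finset.sum_congr rfl fun i _ => Finset.sum_congr rfl fun j _ => ?_
  rw [neg_add, add_mul, exp_add]
  ring

theorem integrableOn_exp_neg_add_mul (hpos : ∀ i, 0 < lam i) (i j : Fin n) :
    IntegrableOn (fun t => exp (-(lam i + lam j) * t)) (Ioi 0) := by
  simpa [neg_mul] using exp_neg_integrableOn_Ioi 0 (add_pos (hpos i) (hpos j))

theorem dotProduct_cauchyPsi_mulVec (hpos : ∀ i, 0 < lam i) (x : Fin n → ℝ) :
    x ⬝ᵥ (cauchyPsi n lam *ᵥ x) = ∫ t in Ioi 0, (∑ i, x i * exp (-lam i * t)) ^ 2 := by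
  simp_rw [sq_sum_mul_exp]
  rw [integral_finsetSum _ fun i _ => integrable_finsetSum _ fun j _ =>
    (integrableOn_exp_neg_add_mul hpos i j).const_mul _]
  refine Finset.sum_congr rfl fun i _ => ?_
  rw [integral_finsetSum _ fun j _ => (integrableOn_exp_neg_add_mul hpos i j).const_mul _,
    mulVec, dotProduct, Finset.mul_sum]
  refine Finset.sum_congr rfl fun j _ => ?_
  rw [integral_const_mul, integral_exp_mul_Ioi (by linarith [hpos i, hpos j])]
  simp only [cauchyPsi, of_apply, mul_zero, exp_zero, neg_div_neg_eq]
  ring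

theorem cauchyPsi_isHermitian : (cauchyPsi n lam).IsHermitian := by
  ext i j
  simp [cauchyPsi, add_comm]

theorem cauchyPsi_posSemidef (hpos : ∀ i, 0 < lam i) : (cauchyPsi n lam).PosSemidef :=
  PosSemidef.of_dotProduct_mulVec_nonneg cauchyPsi_isHermitian fun x => by
    rw [star_trivial, dotProduct_cauchyPsi_mulVec hpos]
    exact integral_nonneg fun t => sq_nonneg _

theorem cauchyPsi_posDef (hpos : ∀ i, 0 < lam i) (hinj : Function.Injective lam) :
    (cauchyPsi n lam).PosDef := by
  refine PosDef.of_dotProduct_mulVec_pos cauchyPsi_isHermitian fun x hx => ?_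
  rw [star_trivial, dotProduct_cauchyPsi_mulVec hpos]
  set f : ℝ → ℝ := fun t => ∑ i, x i * exp (-lam i * t)
  have hf : Continuous f := by fun_prop
  refine (integral_nonneg fun t => sq_nonneg (f t)).lt_of_ne' fun hzero => hx ?_
  have hint : IntegrableOn (fun t => f t ^ 2) (Ioi 0) := by
    simp_rw [f, sq_sum_mul_exp]
    exact integrable_finsetSum _ fun i _ => integrable_finsetSum _ fun j _ =>
      (integrableOn_exp_neg_add_mul hpos i j).const_mul _
  have hae := (integral_eq_zero_iff_of_nonneg (fun t => sq_nonneg (f t)) hint).mp hzero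
  rw [restrict_Ioi_eq_restrict_Ici] at hae
  have hvanish : EqOn (fun t => f t ^ 2) 0 (Ici 0) :=
    Measure.eqOn_of_ae_eq hae (hf.pow 2).continuousOn continuousOn_const
      (by rw [interior_Ici, closure_Ioi])
  exact eq_zero_of_sum_mul_exp_eq_zero (c := fun i => -lam i)
    (fun i j h => hinj (neg_injective h)) fun t ht => pow_eq_zero_iff two_ne_zero |>.mp (hvanish ht)

theorem Matrix.PosSemidef.sInf_spectrum_eq_zero {ι : Type*} [Fintype ι] [DecidableEq ι]
    {A : Matrix ι ι ℝ} (hA : A.PosSemidef) (hdet : A.det = 0) : sInf (spectrum ℝ A) = 0 := by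
  have hzero : (0 : ℝ) ∈ spectrum ℝ A := by
    rw [spectrum.zero_mem_iff, isUnit_iff_isUnit_det, hdet]
    exact not_isUnit_zero
  exact IsLeast.csInf_eq ⟨hzero, (posSemidef_iff_isHermitian_and_spectrum_nonneg.mp hA).2⟩

theorem Matrix.PosDef.sInf_spectrum_pos {ι : Type*} [Fintype ι] [DecidableEq ι] [Nonempty ι]
    {A : Matrix ι ι ℝ} (hA : A.PosDef) : 0 < sInf (spectrum ℝ A) := by
  rw [hA.isHermitian.spectrum_real_eq_range_eigenvalues]
  obtain ⟨i, hi⟩ :=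
    (range_nonempty _).csInf_mem (finite_range hA.isHermitian.eigenvalues)
  exact hi ▸ hA.eigenvalues_pos i

theorem cauchyW_eq_conjTranspose_mul_mul (b : Fin n → ℝ) :
    cauchyW n lam b = (diagonal b)ᴴ * cauchyPsi n lam * diagonal b := by
  rw [diagonal_conjTranspose, star_trivial, cauchyW]

theorem det_cauchyW_eq_zero {b : Fin n → ℝ} {i : Fin n} (hi : b i = 0) :
    (cauchyW n lam b).det = 0 := by
  rw [cauchyW, det_mul, det_mul, det_diagonal, Finset.prod_eq_zero (Finset.mem_univ i) hi,
    zero_mul, zero_mul]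

theorem cauchyW_posSemidef (hpos : ∀ i, 0 < lam i) (b : Fin n → ℝ) :
    (cauchyW n lam b).PosSemidef :=
  cauchyW_eq_conjTranspose_mul_mul b ▸ (cauchyPsi_posSemidef hpos).conjTranspose_mul_mul_same _

theorem cauchyW_posDef (hpos : ∀ i, 0 < lam i) (hinj : Function.Injective lam)
    {b : Fin n → ℝ} (hb : ∀ i, b i ≠ 0) : (cauchyW n lam b).PosDef := by
  rw [cauchyW_eq_conjTranspose_mul_mul]
  refine (cauchyPsi_posDef hpos hinj).conjTranspose_mul_mul_same ?_
  exact mulVec_injective_iff_isUnit.mpr <| isUnit_diagonal.mpr <| Pi.isUnit_iff.mpr fun i =>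
    (hb i).isUnit

theorem xi_eq_zero_of_eq_zero (hpos : ∀ i, 0 < lam i) {b : Fin n → ℝ} {i : Fin n}
    (hi : b i = 0) : xi n lam b = 0 :=
  (cauchyW_posSemidef hpos b).sInf_spectrum_eq_zero (det_cauchyW_eq_zero hi)

theorem xi_pos (hpos : ∀ i, 0 < lam i) (hinj : Function.Injective lam) [Nonempty (Fin n)]
    {b : Fin n → ℝ} (hb : ∀ i, b i ≠ 0) : 0 < xi n lam b :=
  (cauchyW_posDef hpos hinj hb).sInf_spectrum_pos

theorem nonempty_of_sum_sq_eq_one {ι : Type*} [Fintype ι] {b : ι → ℝ} (hb : ∑ i, b i ^ 2 = 1) :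
    Nonempty ι :=
  Finset.univ_nonempty_iff.mp (Finset.nonempty_of_sum_ne_zero (hb ▸ one_ne_zero))

theorem exists_sum_sq_eq_one_forall_ne_zero {ι : Type*} [Fintype ι] [Nonempty ι] :
    ∃ b : ι → ℝ, ∑ i, b i ^ 2 = 1 ∧ ∀ i, b i ≠ 0 := by
  have hcard : (0 : ℝ) < Fintype.card ι := Nat.cast_pos.mpr Fintype.card_pos
  refine ⟨fun _ => (√(Fintype.card ι))⁻¹, ?_, fun _ => by positivity⟩
  simp [inv_pow, sq_sqrt hcard.le, hcard.ne']

theorem xi_zero_pos_maximizer_general (n : ℕ) (lam : Fin n → ℝ)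
    (hpos : ∀ i, 0 < lam i) (hmono : StrictMono lam) :
    (∀ b : Fin n → ℝ, ∑ i, b i ^ 2 = 1 → (∃ i, b i = 0) → xi n lam b = 0) ∧
    (∀ b : Fin n → ℝ, ∑ i, b i ^ 2 = 1 → (∀ i, b i ≠ 0) → 0 < xi n lam b) ∧
    ∀ bstar : Fin n → ℝ, ∑ i, bstar i ^ 2 = 1 →
      (∀ b : Fin n → ℝ, ∑ i, b i ^ 2 = 1 → xi n lam b ≤ xi n lam bstar) →
      ∀ i, bstar i ≠ 0 := by
  have hinj := hmono.injective
  refine ⟨fun b _ ⟨i, hi⟩ => xi_eq_zero_of_eq_zero hpos hi,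
    fun b hb hb0 => have := nonempty_of_sum_sq_eq_one hb; xi_pos hpos hinj hb0, ?_⟩
  intro bstar hbstar hmax i hi
  have := nonempty_of_sum_sq_eq_one hbstar
  obtain ⟨b, hb, hb0⟩ := exists_sum_sq_eq_one_forall_ne_zero (ι := Fin n)
  have hle := hmax b hb
  rw [xi_eq_zero_of_eq_zero hpos hi] at hle
  exact (xi_pos hpos hinj hb0).not_ge hle

/-- `ξ` vanishes at unit vectors with a zero entry, is positive at unit vectors with
no zero entry; hence any maximizer of `ξ` over the unit sphere has no zero entry. -/
theorem xi_zero_pos_maximizer (n : ℕ) (hn : 0 < n) (lam : Fin n → ℝ)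
    (hpos : ∀ i, 0 < lam i) (hmono : StrictMono lam) :
    (∀ b : Fin n → ℝ, ∑ i, b i ^ 2 = 1 → (∃ i, b i = 0) → xi n lam b = 0) ∧
    (∀ b : Fin n → ℝ, ∑ i, b i ^ 2 = 1 → (∀ i, b i ≠ 0) → 0 < xi n lam b) ∧
    ∀ bstar : Fin n → ℝ, ∑ i, bstar i ^ 2 = 1 →
      (∀ b : Fin n → ℝ, ∑ i, b i ^ 2 = 1 → xi n lam b ≤ xi n lam bstar) →
      ∀ i, bstar i ≠ 0 :=
  xi_zero_pos_maximizer_general n lam hpos hmono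
end

section
/- Let b, x ∈ ℝ^n both have all entries nonzero, and let λ ≠ 0 be a real number such that W(b) x = λ x and W(x) b = λ b. Then |x_i| = |b_i| for every i = 1,…,n. -/
open Matrix BigOperators

lemma cauchyW_mulVec (n : ℕ) (lam : Fin n → ℝ) (b v : Fin n → ℝ) (i : Fin n) :
    (cauchyW n lam b).mulVec v i = b i * ∑ j, (1 / (lam i + lam j)) * (b j * v j) := by
  simp [cauchyW, cauchyPsi, Matrix.mulVec, dotProduct, Matrix.mul_apply,
    Matrix.diagonal, Finset.mul_sum]
  apply Finset.sum_congr rfl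
  intro j _
  ring

/-- If `W(b) x = λ x` and `W(x) b = λ b` with `λ ≠ 0` and `b, x` entrywise nonzero,
then `|xᵢ| = |bᵢ|` for every `i`. -/
theorem abs_entries_eq (n : ℕ) (hn : 0 < n) (lam : Fin n → ℝ)
    (hpos : ∀ i, 0 < lam i) (hmono : StrictMono lam)
    (b x : Fin n → ℝ) (hb : ∀ i, b i ≠ 0) (hx : ∀ i, x i ≠ 0)
    (lam0 : ℝ) (hlam0 : lam0 ≠ 0)
    (h1 : (cauchyW n lam b).mulVec x = lam0 • x)
    (h2 : (cauchyW n lam x).mulVec b = lam0 • b) :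
    ∀ i, |x i| = |b i| := by
  intro i
  set s : ℝ := ∑ j, (1 / (lam i + lam j)) * (b j * x j) with hs
  have e1 : b i * s = lam0 * x i := by
    have := congrFun h1 i
    rw [cauchyW_mulVec] at this
    simpa [hs] using this
  have e2 : x i * s = lam0 * b i := by
    have := congrFun h2 i
    rw [cauchyW_mulVec] at this
    have : x i * ∑ j, (1 / (lam i + lam j)) * (x j * b j) = lam0 * b i := by
      simpa using this
    rw [← this, hs]
    congr 1
    apply Finset.sum_congr rfl
    intro j _
    ring
  have hsq : s ^ 2 = lam0 ^ 2 := by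
    have hmul : (b i * s) * (x i * s) = (lam0 * x i) * (lam0 * b i) := by
      rw [e1, e2]
    have hbx : b i * x i ≠ 0 := mul_ne_zero (hb i) (hx i)
    have : (b i * x i) * s ^ 2 = (b i * x i) * lam0 ^ 2 := by ring_nf; ring_nf at hmul; linarith
    exact mul_left_cancel₀ hbx this
  have habs : |s| = |lam0| := by
    have h' : |s| ^ 2 = |lam0| ^ 2 := by rw [sq_abs, sq_abs]; exact hsq
    nlinarith [abs_nonneg s, abs_nonneg lam0]
  have key := congrArg abs e1
  rw [abs_mul, abs_mul, habs] at key
  have hl0 : |lam0| ≠ 0 := abs_ne_zero.mpr hlam0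
  exact (mul_left_cancel₀ hl0 (by linarith : |lam0| * |x i| = |lam0| * |b i|))
end

section
/- Let v* ∈ ℝ^n be the vector with positive entries defined by v*_i = sqrt((σ* Ψ^{-1} σ* 1)_i / (1ᵀ σ* Ψ^{-1} σ* 1)). Then for every n×n diagonal signature matrix σ: the vector σ v* is a unit vector, the smallest eigenvalue of W(σ v*) equals (1ᵀ σ* Ψ^{-1} σ* 1)^{-1}, and σ σ* v* is a unit eigenvector of W(σ v*) corresponding to this smallest eigenvalue. -/
open Matrix BigOperators

/-- The diagonal signature matrix `σ*` with `i`-th diagonal entry `(-1)^i`. -/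
noncomputable def sigmaStar (n : ℕ) : Matrix (Fin n) (Fin n) ℝ :=
  Matrix.diagonal fun i : Fin n => (-1 : ℝ) ^ (i : ℕ)

/-- The optimal actuator profile `v*`, `v*ᵢ = sqrt((σ* Ψ⁻¹ σ* 1)ᵢ / (1ᵀ σ* Ψ⁻¹ σ* 1))`. -/
noncomputable def vStar (n : ℕ) (lam : Fin n → ℝ) : Fin n → ℝ := fun i =>
  Real.sqrt
    ((sigmaStar n * (cauchyPsi n lam)⁻¹ * sigmaStar n).mulVec
        (fun _ : Fin n => (1 : ℝ)) i /
      ((fun _ : Fin n => (1 : ℝ)) ⬝ᵥ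
        (sigmaStar n * (cauchyPsi n lam)⁻¹ * sigmaStar n).mulVec
          fun _ : Fin n => (1 : ℝ)))

/-!
The inverse of the Cauchy matrix is explicit, `Ψ⁻¹ᵢⱼ = gᵢ gⱼ / (λᵢ + λⱼ)`, where the `gⱼ` come from
barycentric Lagrange interpolation at the nodes `-λⱼ`; since `λ` is increasing, `(-1)ʲ gⱼ > 0`,
so `Ψ⁻¹` has a checkerboard sign pattern and `u = σ* Ψ⁻¹ σ* 1` is the vector of absolute row
sums of `Ψ⁻¹`. Put `S = 1ᵀ u`, so that `v*ᵢ² = uᵢ / S`. Then `σ v* ∘ σ σ* v* = σ* u / S` and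
`Ψ σ* u = σ* 1`, which makes `σ σ* v*` an eigenvector of `W(σ v*)` for `1 / S`.

For the lower bound, `Ψ` is the Gram matrix of `t ↦ exp (-λᵢ t)` in `L²(0, ∞)`, hence positive
semidefinite. Expanding `0 ≤ (y - Ψ⁻¹ p)ᵀ Ψ (y - Ψ⁻¹ p)` with `p = y / u` and bounding
`pᵀ Ψ⁻¹ p ≤ ∑ uᵢ pᵢ²` (Schur test) gives `yᵀ Ψ y ≥ ∑ yᵢ² / uᵢ`; for `y = σ v* ∘ z` this reads
`zᵀ W(σ v*) z ≥ |z|² / S`.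
-/

open Finset Polynomial MeasureTheory

namespace Matrix

variable {ι R 𝕜 : Type*} [Fintype ι] [CommRing R]
  [Field 𝕜] [LinearOrder 𝕜] [IsStrictOrderedRing 𝕜]

theorem diagonal_mulVec_eq_mul [DecidableEq ι] (b w : ι → R) : diagonal b *ᵥ w = b * w :=
  funext (mulVec_diagonal b w)

theorem dotProduct_mulVec_le_sum_abs_mul_sq {B : Matrix ι ι 𝕜} (hB : B.IsSymm)
    (p : ι → 𝕜) : p ⬝ᵥ B *ᵥ p ≤ ∑ i, (∑ j, |B i j|) * p i ^ 2 := by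
  have hterm : ∀ i j, p i * (B i j * p j) ≤ |B i j| * (p i ^ 2 + p j ^ 2) / 2 := fun i j => by
    have h1 : p i * (B i j * p j) ≤ |B i j| * (|p i| * |p j|) := by
      rw [← abs_mul, ← abs_mul]; exact (le_abs_self _).trans_eq (by ring_nf)
    have h2 : 2 * (|p i| * |p j|) ≤ p i ^ 2 + p j ^ 2 := by
      rw [← sq_abs (p i), ← sq_abs (p j)]; nlinarith [sq_nonneg (|p i| - |p j|)]
    nlinarith [abs_nonneg (B i j)]
  have hsymm : ∑ i, ∑ j, |B i j| * p j ^ 2 = ∑ i, ∑ j, |B i j| * p i ^ 2 := by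
    rw [sum_comm]; exact sum_congr rfl fun i _ => sum_congr rfl fun j _ => by rw [hB.apply j i]
  calc p ⬝ᵥ B *ᵥ p = ∑ i, ∑ j, p i * (B i j * p j) := by
        simp only [dotProduct, mulVec, mul_sum]
    _ ≤ ∑ i, ∑ j, |B i j| * (p i ^ 2 + p j ^ 2) / 2 :=
        sum_le_sum fun i _ => sum_le_sum fun j _ => hterm i j
    _ = ∑ i, (∑ j, |B i j|) * p i ^ 2 := by
        simp only [mul_add, add_div, sum_add_distrib, ← sum_div, hsymm, sum_mul]; ring

theorem two_mul_dotProduct_sub_le [DecidableEq ι] {Ψ B : Matrix ι ι 𝕜} (hΨ : Ψ.IsSymm)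
    (hpsd : ∀ z, 0 ≤ z ⬝ᵥ Ψ *ᵥ z) (hB : Ψ * B = 1) (y p : ι → 𝕜) :
    2 * (p ⬝ᵥ y) - p ⬝ᵥ B *ᵥ p ≤ y ⬝ᵥ Ψ *ᵥ y := by
  have hΨB : ∀ w, Ψ *ᵥ (B *ᵥ w) = w := fun w => by rw [mulVec_mulVec, hB, one_mulVec]
  have hswap : ∀ v w, v ⬝ᵥ Ψ *ᵥ w = w ⬝ᵥ Ψ *ᵥ v := fun v w => by
    rw [dotProduct_mulVec, ← mulVec_transpose, hΨ.eq, dotProduct_comm]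
  have h := hpsd (y - B *ᵥ p)
  rw [mulVec_sub, dotProduct_sub, sub_dotProduct, sub_dotProduct, hΨB, hswap (B *ᵥ p) y, hΨB,
    dotProduct_comm (B *ᵥ p) p, dotProduct_comm y p] at h
  linarith

theorem sum_sq_div_le_dotProduct_mulVec [DecidableEq ι] {Ψ : Matrix ι ι 𝕜} (hΨ : Ψ.IsSymm)
    (hpsd : ∀ z, 0 ≤ z ⬝ᵥ Ψ *ᵥ z) (hdet : IsUnit Ψ.det) (y : ι → 𝕜) :
    ∑ i, y i ^ 2 / ∑ j, |Ψ⁻¹ i j| ≤ y ⬝ᵥ Ψ *ᵥ y := by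
  set r : ι → 𝕜 := fun i => ∑ j, |Ψ⁻¹ i j|
  set p : ι → 𝕜 := fun i => y i / r i
  have hpy : p ⬝ᵥ y = ∑ i, y i ^ 2 / r i := sum_congr rfl fun i _ => by simp only [p]; ring
  have hrp : ∑ i, r i * p i ^ 2 = ∑ i, y i ^ 2 / r i := sum_congr rfl fun i _ => by
    rcases eq_or_ne (r i) 0 with h | h
    · simp [h]
    · simp only [p]; field_simp
  have h1 := two_mul_dotProduct_sub_le hΨ hpsd (mul_nonsing_inv Ψ hdet) y p
  have h2 := dotProduct_mulVec_le_sum_abs_mul_sq hΨ.inv p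
  linarith

theorem mem_spectrum_iff_exists_mulVec_eq_smul {K : Type*} [Field K] [DecidableEq ι]
    {A : Matrix ι ι K} {μ : K} : μ ∈ spectrum K A ↔ ∃ v ≠ 0, A *ᵥ v = μ • v := by
  rw [← spectrum_toLin', ← Module.End.hasEigenvalue_iff_mem_spectrum,
    Module.End.hasEigenvalue_iff, Submodule.ne_bot_iff]
  simp only [Module.End.mem_eigenspace_iff, toLin'_apply]
  exact ⟨fun ⟨v, hv, h0⟩ => ⟨v, h0, hv⟩, fun ⟨v, h0, hv⟩ => ⟨v, hv, h0⟩⟩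

theorem sInf_spectrum_eq_of_le_dotProduct_mulVec [DecidableEq ι] {A : Matrix ι ι ℝ} {μ : ℝ}
    {x : ι → ℝ} (hx : x ≠ 0) (hAx : A *ᵥ x = μ • x)
    (hle : ∀ z, μ * (z ⬝ᵥ z) ≤ z ⬝ᵥ A *ᵥ z) : sInf (spectrum ℝ A) = μ := by
  have hmem : μ ∈ spectrum ℝ A := mem_spectrum_iff_exists_mulVec_eq_smul.mpr ⟨x, hx, hAx⟩
  have hlower : ∀ ν ∈ spectrum ℝ A, μ ≤ ν := fun ν hν => by
    obtain ⟨y, hy, hAy⟩ := mem_spectrum_iff_exists_mulVec_eq_smul.mp hν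
    have hyy : 0 < y ⬝ᵥ y := lt_of_le_of_ne (Fintype.sum_nonneg fun i => mul_self_nonneg (y i))
      (Ne.symm (dotProduct_self_eq_zero.not.mpr hy))
    have hyle := hle y
    rw [hAy, dotProduct_smul, smul_eq_mul] at hyle
    nlinarith
  exact le_antisymm (csInf_le ⟨μ, hlower⟩ hmem) (le_csInf ⟨μ, hmem⟩ hlower)

theorem diagonal_mul_mul_diagonal_mulVec_eq_smul [DecidableEq ι] {Ψ B : Matrix ι ι R}
    (hB : Ψ * B = 1) {b d : ι → R} {c : R} (hb : ∀ i, b i ^ 2 * d i = c * (B *ᵥ d) i) :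
    (diagonal b * Ψ * diagonal b) *ᵥ (d * b) = c • (d * b) := by
  have hbb : b * (d * b) = c • B *ᵥ d := funext fun i => by
    simp only [Pi.mul_apply, Pi.smul_apply, smul_eq_mul, ← hb]; ring
  rw [← mulVec_mulVec, ← mulVec_mulVec, diagonal_mulVec_eq_mul b (d * b), hbb, mulVec_smul,
    mulVec_mulVec, hB, one_mulVec, mulVec_smul, diagonal_mulVec_eq_mul, mul_comm]

theorem dotProduct_diagonal_mul_mul_diagonal_mulVec [DecidableEq ι] (Ψ : Matrix ι ι R)
    (b z : ι → R) : z ⬝ᵥ (diagonal b * Ψ * diagonal b) *ᵥ z = (b * z) ⬝ᵥ Ψ *ᵥ (b * z) := by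
  rw [← mulVec_mulVec, ← mulVec_mulVec, diagonal_mulVec_eq_mul, diagonal_mulVec_eq_mul]
  simp only [dotProduct, Pi.mul_apply]
  exact sum_congr rfl fun i _ => by ring

end Matrix

theorem sum_sum_mul_integral_mul_nonneg {α ι : Type*} [MeasurableSpace α] [Fintype ι]
    (μ : Measure α) (f : ι → α → ℝ) (hf : ∀ i j, Integrable (fun a => f i a * f j a) μ)
    (x : ι → ℝ) : 0 ≤ ∑ i, ∑ j, x i * x j * ∫ a, f i a * f j a ∂μ := by
  have hsq : ∀ a, (∑ i, x i * f i a) ^ 2 = ∑ i, ∑ j, x i * x j * (f i a * f j a) := fun a => by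
    rw [sq, sum_mul_sum]; exact sum_congr rfl fun i _ => sum_congr rfl fun j _ => by ring
  have h : ∫ a, (∑ i, x i * f i a) ^ 2 ∂μ = ∑ i, ∑ j, x i * x j * ∫ a, f i a * f j a ∂μ := by
    simp_rw [hsq, ← integral_const_mul]
    rw [integral_finsetSum _ fun i _ => integrable_finsetSum _ fun j _ => (hf i j).const_mul _]
    exact sum_congr rfl fun i _ => integral_finsetSum _ fun j _ => (hf i j).const_mul _
  rw [← h]
  exact integral_nonneg fun a => sq_nonneg _

theorem StrictMono.neg_one_pow_mul_prod_sub_pos {n : ℕ} {R : Type*} [CommRing R] [LinearOrder R]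
    [IsStrictOrderedRing R] {f : Fin n → R} (hf : StrictMono f) (j : Fin n) :
    0 < (-1) ^ (j : ℕ) * ∏ k ∈ univ.erase j, (f k - f j) := by
  rw [← prod_filter_mul_prod_filter_not (univ.erase j) (· < j)]
  have hlt : (univ.erase j).filter (· < j) = Iio j := by
    ext k; simpa using fun h => h.ne
  have hneg : ∏ k ∈ Iio j, (f k - f j) = (-1) ^ (j : ℕ) * ∏ k ∈ Iio j, (f j - f k) := by
    rw [← Fin.card_Iio j, ← prod_neg]; simp only [neg_sub]
  rw [hlt, hneg, ← mul_assoc, ← mul_assoc, ← mul_pow, neg_one_mul, neg_neg, one_pow, one_mul]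
  refine mul_pos (prod_pos fun k hk => sub_pos.mpr (hf (mem_Iio.mp hk))) (prod_pos fun k hk => ?_)
  simp only [mem_filter, mem_erase, not_lt] at hk
  exact sub_pos.mpr (hf (lt_of_le_of_ne hk.2 hk.1.1.symm))

section Actuators

open Matrix

def IsCheckerboard {n : ℕ} (A : Matrix (Fin n) (Fin n) ℝ) : Prop :=
  ∀ i j : Fin n, 0 < (-1) ^ (i : ℕ) * A i j * (-1) ^ (j : ℕ)

variable {n : ℕ} {Ψ : Matrix (Fin n) (Fin n) ℝ}

noncomputable def actuatorWeights (Ψ : Matrix (Fin n) (Fin n) ℝ) : Fin n → ℝ :=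
  (sigmaStar n * Ψ⁻¹ * sigmaStar n).mulVec fun _ => 1

noncomputable def actuatorWeightSum (Ψ : Matrix (Fin n) (Fin n) ℝ) : ℝ :=
  (fun _ => 1) ⬝ᵥ actuatorWeights Ψ

/-- `vStar n lam` is `actuatorProfile (cauchyPsi n lam)` by definition. -/
noncomputable def actuatorProfile (Ψ : Matrix (Fin n) (Fin n) ℝ) : Fin n → ℝ := fun i =>
  Real.sqrt (actuatorWeights Ψ i / actuatorWeightSum Ψ)

theorem actuatorWeights_eq (Ψ : Matrix (Fin n) (Fin n) ℝ) :
    actuatorWeights Ψ =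
      (fun i : Fin n => (-1 : ℝ) ^ (i : ℕ)) * Ψ⁻¹ *ᵥ fun i => (-1) ^ (i : ℕ) := by
  rw [actuatorWeights, sigmaStar, ← mulVec_mulVec, ← mulVec_mulVec, diagonal_mulVec_eq_mul,
    diagonal_mulVec_eq_mul]
  exact congrArg _ (congrArg _ (mul_one _))

theorem actuatorWeights_eq_sum_abs (hsign : IsCheckerboard Ψ⁻¹) (i : Fin n) :
    actuatorWeights Ψ i = ∑ j, |Ψ⁻¹ i j| := by
  rw [actuatorWeights_eq, Pi.mul_apply, mulVec, dotProduct, mul_sum]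
  refine sum_congr rfl fun j _ => ?_
  rw [← mul_assoc, ← abs_of_pos (hsign i j), abs_mul, abs_mul]
  simp

theorem actuatorWeights_pos (hsign : IsCheckerboard Ψ⁻¹) (i : Fin n) :
    0 < actuatorWeights Ψ i := by
  rw [actuatorWeights_eq_sum_abs hsign]
  refine sum_pos (fun j _ => abs_pos.mpr fun h => ?_) ⟨i, mem_univ i⟩
  simpa [h] using hsign i j

theorem actuatorWeightSum_eq_sum (Ψ : Matrix (Fin n) (Fin n) ℝ) :
    actuatorWeightSum Ψ = ∑ i, actuatorWeights Ψ i := by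
  simp [actuatorWeightSum, dotProduct]

theorem actuatorProfile_sq (hsign : IsCheckerboard Ψ⁻¹) (i : Fin n) :
    actuatorProfile Ψ i ^ 2 = actuatorWeights Ψ i / actuatorWeightSum Ψ := by
  refine Real.sq_sqrt (div_nonneg (actuatorWeights_pos hsign i).le ?_)
  rw [actuatorWeightSum_eq_sum]
  exact sum_nonneg fun j _ => (actuatorWeights_pos hsign j).le

theorem sum_sq_mul_actuatorProfile (hn : 0 < n) (hsign : IsCheckerboard Ψ⁻¹) {c : Fin n → ℝ}
    (hc : ∀ i, c i ^ 2 = 1) : ∑ i, (c i * actuatorProfile Ψ i) ^ 2 = 1 := by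
  have hS : 0 < actuatorWeightSum Ψ := by
    rw [actuatorWeightSum_eq_sum]
    exact sum_pos (fun i _ => actuatorWeights_pos hsign i) ⟨⟨0, hn⟩, mem_univ _⟩
  simp_rw [mul_pow, hc, one_mul, actuatorProfile_sq hsign, ← sum_div,
    ← actuatorWeightSum_eq_sum]
  exact div_self hS.ne'

theorem mulVec_actuatorProfile (hdet : IsUnit Ψ.det) (hsign : IsCheckerboard Ψ⁻¹)
    {ε : Fin n → ℝ} (hε : ∀ i, ε i ^ 2 = 1) :
    (diagonal (fun i => ε i * actuatorProfile Ψ i) * Ψ *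
        diagonal fun i => ε i * actuatorProfile Ψ i) *ᵥ
        (fun i => ε i * (-1) ^ (i : ℕ) * actuatorProfile Ψ i) =
      (actuatorWeightSum Ψ)⁻¹ • fun i => ε i * (-1) ^ (i : ℕ) * actuatorProfile Ψ i := by
  have h := diagonal_mul_mul_diagonal_mulVec_eq_smul (mul_nonsing_inv Ψ hdet)
    (b := fun i => ε i * actuatorProfile Ψ i) (d := fun i => (-1) ^ (i : ℕ))
    (c := (actuatorWeightSum Ψ)⁻¹) fun i => by
      have hd : ((-1 : ℝ) ^ (i : ℕ)) ^ 2 = 1 := by simp [neg_one_pow_eq_or]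
      rw [mul_pow, hε, actuatorProfile_sq hsign, actuatorWeights_eq, Pi.mul_apply]
      linear_combination (Ψ⁻¹ *ᵥ fun i : Fin n => (-1 : ℝ) ^ (i : ℕ)) i /
        actuatorWeightSum Ψ * hd
  convert h using 2 <;> exact funext fun i => by simp only [Pi.mul_apply]; ring

theorem inv_actuatorWeightSum_mul_dotProduct_le (hΨ : Ψ.IsSymm)
    (hpsd : ∀ z, 0 ≤ z ⬝ᵥ Ψ *ᵥ z) (hdet : IsUnit Ψ.det) (hsign : IsCheckerboard Ψ⁻¹)
    {ε : Fin n → ℝ} (hε : ∀ i, ε i ^ 2 = 1) (z : Fin n → ℝ) :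
    (actuatorWeightSum Ψ)⁻¹ * (z ⬝ᵥ z) ≤
      z ⬝ᵥ (diagonal (fun i => ε i * actuatorProfile Ψ i) * Ψ *
        diagonal fun i => ε i * actuatorProfile Ψ i) *ᵥ z := by
  rw [dotProduct_diagonal_mul_mul_diagonal_mulVec]
  refine Eq.trans_le ?_ (sum_sq_div_le_dotProduct_mulVec hΨ hpsd hdet _)
  rw [dotProduct, mul_sum]
  refine sum_congr rfl fun i _ => ?_
  have hu := (actuatorWeights_pos hsign i).ne'
  rw [← actuatorWeights_eq_sum_abs hsign, Pi.mul_apply, mul_pow, mul_pow, hε,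
    actuatorProfile_sq hsign]
  field_simp

end Actuators

section CauchyMatrix

variable {n : ℕ} {lam : Fin n → ℝ}

theorem cauchyPsi_isSymm (n : ℕ) (lam : Fin n → ℝ) : (cauchyPsi n lam).IsSymm :=
  Matrix.IsSymm.ext fun i j => by simp only [cauchyPsi, Matrix.of_apply, add_comm]

theorem dotProduct_cauchyPsi_mulVec_nonneg (hpos : ∀ i, 0 < lam i) (z : Fin n → ℝ) :
    0 ≤ z ⬝ᵥ cauchyPsi n lam *ᵥ z := by
  have hexp : ∀ i j t, Real.exp (-lam i * t) * Real.exp (-lam j * t) =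
      Real.exp (-(lam i + lam j) * t) := fun i j t => by rw [← Real.exp_add]; ring_nf
  have hint : ∀ i j, ∫ t in Set.Ioi 0, Real.exp (-lam i * t) * Real.exp (-lam j * t) =
      1 / (lam i + lam j) := fun i j => by
    simp only [hexp]
    rw [integral_exp_mul_Ioi (by linarith [hpos i, hpos j]), mul_zero, Real.exp_zero]
    field_simp
  have h := sum_sum_mul_integral_mul_nonneg (volume.restrict (Set.Ioi 0))
    (fun i t => Real.exp (-lam i * t)) (fun i j => by
      simp only [hexp]
      exact integrableOn_exp_mul_Ioi (by linarith [hpos i, hpos j]) 0) z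
  simp only [hint] at h
  convert h using 1
  simp only [dotProduct, Matrix.mulVec, cauchyPsi, Matrix.of_apply, mul_sum]
  exact sum_congr rfl fun i _ => sum_congr rfl fun j _ => by ring

/-- With the nodes `-λ`, `nodalWeight` is `∏_{k ≠ j} (λₖ - λⱼ)⁻¹`. -/
noncomputable def cauchyWeight (n : ℕ) (lam : Fin n → ℝ) (j : Fin n) : ℝ :=
  (∏ k, (lam j + lam k)) * Lagrange.nodalWeight univ (-lam) j

noncomputable def cauchyPsiInv (n : ℕ) (lam : Fin n → ℝ) : Matrix (Fin n) (Fin n) ℝ :=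
  Matrix.of fun i j => cauchyWeight n lam i * cauchyWeight n lam j / (lam i + lam j)

/-- Barycentric interpolation of `∏_{k ≠ m} (λₖ - X)` at the nodes `-λⱼ`, evaluated at `λᵢ`. -/
theorem sum_cauchyWeight_div (hsum : ∀ i j, lam i + lam j ≠ 0) (hinj : Function.Injective lam)
    (i m : Fin n) :
    ∑ j, cauchyWeight n lam j / ((lam i + lam j) * (lam j + lam m)) =
      (∏ k ∈ univ.erase m, (lam k - lam i)) / ∏ k, (lam i + lam k) := by
  set P : ℝ[X] := ∏ k ∈ univ.erase m, (C (lam k) - X)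
  have hP : ∀ y, P.eval y = ∏ k ∈ univ.erase m, (lam k - y) := fun y => by
    simp [P, eval_prod]
  have hdeg : P.degree < #(univ : Finset (Fin n)) := by
    have h1 : ∀ k, (C (lam k) - X).degree = 1 := fun k => by
      rw [← neg_sub, degree_neg, degree_X_sub_C]
    simp only [P, degree_prod, h1, sum_const, nsmul_one]
    exact_mod_cast card_erase_lt_of_mem (mem_univ m)
  have hnodes : Set.InjOn (-lam) (univ : Finset (Fin n)) := fun a _ b _ h => hinj (neg_inj.mp h)
  have hbary := Lagrange.eval_interpolate_not_at_node (s := univ) (v := -lam)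
    (fun j => P.eval ((-lam) j)) (x := lam i) fun j _ => by
      simpa [eq_neg_iff_add_eq_zero] using hsum i j
  rw [← Lagrange.eq_interpolate hnodes hdeg, Lagrange.eval_nodal, hP] at hbary
  rw [eq_div_iff (prod_ne_zero_iff.mpr fun k _ => hsum i k), hbary]
  simp only [Pi.neg_apply, sub_neg_eq_add, mul_comm (∏ k, (lam i + lam k))]
  congr 1
  refine sum_congr rfl fun j _ => ?_
  rw [cauchyWeight, ← mul_prod_erase univ _ (mem_univ m), hP]
  simp only [sub_neg_eq_add, add_comm (lam _) (lam j)]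
  field_simp [hsum i j, hsum j m]

theorem cauchyPsi_mul_cauchyPsiInv (hsum : ∀ i j, lam i + lam j ≠ 0)
    (hinj : Function.Injective lam) : cauchyPsi n lam * cauchyPsiInv n lam = 1 := by
  ext i m
  have hentry : (cauchyPsi n lam * cauchyPsiInv n lam) i m = cauchyWeight n lam m *
      ((∏ k ∈ univ.erase m, (lam k - lam i)) / ∏ k, (lam i + lam k)) := by
    rw [← sum_cauchyWeight_div hsum hinj, Matrix.mul_apply, mul_sum]
    refine sum_congr rfl fun j _ => ?_
    simp only [cauchyPsi, cauchyPsiInv, Matrix.of_apply]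
    field_simp [hsum i j, hsum j m]
  rw [hentry]
  rcases eq_or_ne i m with rfl | him
  · have hsub : ∏ k ∈ univ.erase i, (lam k - lam i) ≠ 0 :=
      prod_ne_zero_iff.mpr fun k hk => sub_ne_zero.mpr (hinj.ne (ne_of_mem_erase hk))
    rw [Matrix.one_apply_eq, cauchyWeight, Lagrange.nodalWeight, prod_inv_distrib]
    simp only [Pi.neg_apply, neg_sub_neg]
    field_simp [hsub, prod_ne_zero_iff.mpr fun k _ => hsum i k]
  · rw [Matrix.one_apply_ne him, prod_eq_zero (mem_erase.mpr ⟨him, mem_univ i⟩) (sub_self _),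
      zero_div, mul_zero]

theorem neg_one_pow_mul_cauchyWeight_pos (hpos : ∀ i, 0 < lam i) (hmono : StrictMono lam)
    (j : Fin n) : 0 < (-1) ^ (j : ℕ) * cauchyWeight n lam j := by
  have hw : (-1) ^ (j : ℕ) * cauchyWeight n lam j = (∏ k, (lam j + lam k)) *
      ((-1) ^ (j : ℕ) * ∏ k ∈ univ.erase j, (lam k - lam j))⁻¹ := by
    simp only [cauchyWeight, Lagrange.nodalWeight, prod_inv_distrib, Pi.neg_apply, neg_sub_neg]
    rw [mul_inv, ← inv_pow, inv_neg_one]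
    ring
  rw [hw]
  exact mul_pos (prod_pos fun k _ => add_pos (hpos j) (hpos k))
    (inv_pos.mpr (hmono.neg_one_pow_mul_prod_sub_pos j))

theorem isCheckerboard_cauchyPsiInv (hpos : ∀ i, 0 < lam i) (hmono : StrictMono lam) :
    IsCheckerboard (cauchyPsiInv n lam) := by
  intro i j
  have h : (-1) ^ (i : ℕ) * cauchyPsiInv n lam i j * (-1) ^ (j : ℕ) =
      (-1) ^ (i : ℕ) * cauchyWeight n lam i * ((-1) ^ (j : ℕ) * cauchyWeight n lam j) /
        (lam i + lam j) := by
    simp only [cauchyPsiInv, Matrix.of_apply]; ring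
  rw [h]
  exact div_pos (mul_pos (neg_one_pow_mul_cauchyWeight_pos hpos hmono i)
    (neg_one_pow_mul_cauchyWeight_pos hpos hmono j)) (add_pos (hpos i) (hpos j))

end CauchyMatrix

/-- For every diagonal signature matrix `σ` (encoded by its diagonal `ε` with
`εᵢ = ±1`): `σ v*` is a unit vector, the smallest eigenvalue of `W(σ v*)` equals
`(1ᵀ σ* Ψ⁻¹ σ* 1)⁻¹`, and `σ σ* v*` is a unit eigenvector of `W(σ v*)` for this
smallest eigenvalue. -/
theorem optimal_actuators (n : ℕ) (hn : 0 < n) (lam : Fin n → ℝ)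
    (hpos : ∀ i, 0 < lam i) (hmono : StrictMono lam)
    (ε : Fin n → ℝ) (hε : ∀ i, ε i = 1 ∨ ε i = -1) :
    (∑ i, (ε i * vStar n lam i) ^ 2 = 1) ∧
    sInf (spectrum ℝ (cauchyW n lam fun i => ε i * vStar n lam i)) =
      ((fun _ : Fin n => (1 : ℝ)) ⬝ᵥ
        (sigmaStar n * (cauchyPsi n lam)⁻¹ * sigmaStar n).mulVec
          fun _ : Fin n => (1 : ℝ))⁻¹ ∧
    (∑ i, (ε i * (-1 : ℝ) ^ (i : ℕ) * vStar n lam i) ^ 2 = 1) ∧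
    (cauchyW n lam fun i => ε i * vStar n lam i).mulVec
        (fun i => ε i * (-1 : ℝ) ^ (i : ℕ) * vStar n lam i) =
      sInf (spectrum ℝ (cauchyW n lam fun i => ε i * vStar n lam i)) •
        fun i => ε i * (-1 : ℝ) ^ (i : ℕ) * vStar n lam i := by
  have hinv := cauchyPsi_mul_cauchyPsiInv (fun i j => (add_pos (hpos i) (hpos j)).ne')
    hmono.injective
  have hdet : IsUnit (cauchyPsi n lam).det := Matrix.isUnit_det_of_right_inverse hinv
  have hsign : IsCheckerboard (cauchyPsi n lam)⁻¹ :=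
    Matrix.inv_eq_right_inv hinv ▸ isCheckerboard_cauchyPsiInv hpos hmono
  have hε2 : ∀ i, ε i ^ 2 = 1 := fun i => by rcases hε i with h | h <;> simp [h]
  have hunit : ∑ i, (ε i * (-1) ^ (i : ℕ) * actuatorProfile (cauchyPsi n lam) i) ^ 2 = 1 :=
    sum_sq_mul_actuatorProfile hn hsign fun i => by simp [mul_pow, hε2, neg_one_pow_eq_or]
  have heig := mulVec_actuatorProfile hdet hsign hε2
  have hmin := Matrix.sInf_spectrum_eq_of_le_dotProduct_mulVec
    (fun h => by simp [funext_iff.mp h] at hunit) heig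
    (inv_actuatorWeightSum_mul_dotProduct_le (cauchyPsi_isSymm n lam)
      (dotProduct_cauchyPsi_mulVec_nonneg hpos) hdet hsign hε2)
  exact ⟨sum_sq_mul_actuatorProfile hn hsign hε2, hmin, hunit, hmin ▸ heig⟩
end
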